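/- arXiv:1301.4878 — 2 statements merged into one kernel-verified Lean document; each statement's English description precedes it below -/
import Mathlib

section
/- The rational function equality ∏_{i∈S₀}(1-t^{N_i})^{χ_i} with data N = (4,6,12,14,16,17,34,4,4,4,0,1) minus (1,1,2,2,2,2,4,2,3,4,1,0) and the Euler characteristics from the resolution graph yields ζ_f(t) = (1-t^5)(1-t^{15}) / ((1-t^{10})(1-t^{30})), and moreover this equals 1/((1+t^5)(1+t^{15})) as a rational function in t. -/
/-!
Since `1 - t^{2k} = (1 - t^k)(1 + t^k)`, each quotient `(1 - t^k)/(1 - t^{2k})` collapses to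
`1/(1 + t^k)`; apply this with `k = 5` and `k = 15`.
-/

open Polynomial in
theorem RatFunc.one_sub_X_pow_ne_zero {K : Type*} [CommRing K] [IsDomain K] {n : ℕ}
    (hn : n ≠ 0) : (1 - RatFunc.X ^ n : RatFunc K) ≠ 0 := by
  rw [← RatFunc.algebraMap_X, ← map_pow, ← map_one (algebraMap K[X] _), ← map_sub]
  refine RatFunc.algebraMap_ne_zero fun h =>
    X_pow_sub_C_ne_zero (R := K) (Nat.pos_of_ne_zero hn) 1 ?_
  rw [C_1, ← neg_sub, h, neg_zero]

theorem one_sub_div_one_sub_sq {K : Type*} [Field K] {a : K} (ha : 1 - a ^ 2 ≠ 0) :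
    (1 - a) / (1 - a ^ 2) = 1 / (1 + a) := by
  have hfactor : 1 - a ^ 2 = (1 - a) * (1 + a) := by ring
  rw [hfactor] at ha ⊢
  rw [div_mul_cancel_left₀ (left_ne_zero_of_mul ha), one_div]

theorem RatFunc.one_sub_X_pow_div_one_sub_X_pow_two_mul {K : Type*} [Field K] {k : ℕ}
    (hk : k ≠ 0) :
    (1 - RatFunc.X ^ k : RatFunc K) / (1 - RatFunc.X ^ (2 * k)) = 1 / (1 + RatFunc.X ^ k) := by
  have hne : (1 - (RatFunc.X ^ k) ^ 2 : RatFunc K) ≠ 0 := by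
    rw [← pow_mul']
    exact RatFunc.one_sub_X_pow_ne_zero (mul_ne_zero two_ne_zero hk)
  rw [pow_mul', one_sub_div_one_sub_sq hne]

/-- For the meromorphic germ `f = ((y²-x³)² - xy⁵)/(x-y)`, the A'Campo-type product
`∏_{i∈S₀} (1 - t^{N_i})^{χ_i}` over the components with `N_i = N_i^P - N_i^Q > 0`,
namely `N = (3,5,10,12,14,15,30,2,1,1)` with Euler characteristics
`χ = (0,1,-1,0,0,1,-1,0,0,0)`, equals
`(1-t^5)(1-t^{15})/((1-t^{10})(1-t^{30}))`, which in turn equals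
`1/((1+t^5)(1+t^{15}))` in the field of rational functions `ℚ(t)`. -/
theorem zeta_function_of_meromorphic_germ_example :
    let t : RatFunc ℚ := RatFunc.X
    (1 - t ^ 3) ^ (0 : ℤ) * (1 - t ^ 5) ^ (1 : ℤ) * (1 - t ^ 10) ^ (-1 : ℤ) *
      (1 - t ^ 12) ^ (0 : ℤ) * (1 - t ^ 14) ^ (0 : ℤ) * (1 - t ^ 15) ^ (1 : ℤ) *
      (1 - t ^ 30) ^ (-1 : ℤ) * (1 - t ^ 2) ^ (0 : ℤ) * (1 - t) ^ (0 : ℤ) *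
      (1 - t) ^ (0 : ℤ)
      = (1 - t ^ 5) * (1 - t ^ 15) / ((1 - t ^ 10) * (1 - t ^ 30)) ∧
    (1 - t ^ 5) * (1 - t ^ 15) / ((1 - t ^ 10) * (1 - t ^ 30))
      = 1 / ((1 + t ^ 5) * (1 + t ^ 15)) := by
  intro t
  refine ⟨by simp only [zpow_zero, zpow_one, zpow_neg_one, div_eq_mul_inv, mul_inv]; ring, ?_⟩
  calc (1 - t ^ 5) * (1 - t ^ 15) / ((1 - t ^ 10) * (1 - t ^ 30))
      = (1 - t ^ 5) / (1 - t ^ (2 * 5)) * ((1 - t ^ 15) / (1 - t ^ (2 * 15))) :=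
        mul_div_mul_comm _ _ _ _
    _ = 1 / (1 + t ^ 5) * (1 / (1 + t ^ 15)) := by
        rw [RatFunc.one_sub_X_pow_div_one_sub_X_pow_two_mul (by norm_num),
          RatFunc.one_sub_X_pow_div_one_sub_X_pow_two_mul (by norm_num)]
    _ = 1 / ((1 + t ^ 5) * (1 + t ^ 15)) := by rw [one_div_mul_one_div]
end

section
/- The rational function (20s² + 33s + 12)/(15(s+1)(2s+1)²) has poles exactly at s = -1 and s = -1/2; in particular the candidate poles -4, -3/2, -2/3, -3/5, -8/15 are not poles. -/
open Polynomial

private lemma q_ne_zero :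
    (15 * (X + 1) * (2 * X + 1) ^ 2 : ℚ[X]) ≠ 0 := by
  intro h
  have := congrArg (Polynomial.eval 0) h
  norm_num at this

private lemma key_eq :
    let Z : RatFunc ℚ :=
      RatFunc.mk (20 * X ^ 2 + 33 * X + 12) (15 * (X + 1) * (2 * X + 1) ^ 2)
    (20 * X ^ 2 + 33 * X + 12 : ℚ[X]) * Z.denom = Z.num * (15 * (X + 1) * (2 * X + 1) ^ 2) := by
  intro Z
  have hq := q_ne_zero
  have h1 : algebraMap ℚ[X] (RatFunc ℚ) (20 * X ^ 2 + 33 * X + 12) /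
      algebraMap ℚ[X] (RatFunc ℚ) (15 * (X + 1) * (2 * X + 1) ^ 2) =
      algebraMap ℚ[X] (RatFunc ℚ) Z.num / algebraMap ℚ[X] (RatFunc ℚ) Z.denom := by
    rw [RatFunc.num_div_denom]
    exact (RatFunc.mk_eq_div _ _).symm
  have hq' : algebraMap ℚ[X] (RatFunc ℚ) (15 * (X + 1) * (2 * X + 1) ^ 2) ≠ 0 := by
    intro h
    exact hq (RatFunc.algebraMap_injective ℚ (h.trans (map_zero _).symm))
  have hd' : algebraMap ℚ[X] (RatFunc ℚ) Z.denom ≠ 0 := by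
    intro h
    exact Z.denom_ne_zero (RatFunc.algebraMap_injective ℚ (h.trans (map_zero _).symm))
  rw [div_eq_div_iff hq' hd', ← map_mul, ← map_mul] at h1
  exact RatFunc.algebraMap_injective ℚ h1

/-- The rational function `(20s²+33s+12)/(15(s+1)(2s+1)²)` (the local topological zeta
function of the meromorphic germ `f = ((y²-x³)²-xy⁵)/(x-y)`) has poles exactly at
`s = -1` and `s = -1/2`: a rational number `a` is a root of the lowest-terms denominator
iff `a = -1` or `a = -1/2`.  In particular the candidate poles
`-4, -3/2, -2/3, -3/5, -8/15` are not poles. -/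
theorem poles_of_topological_zeta_function_example :
    let Z : RatFunc ℚ :=
      RatFunc.mk (20 * X ^ 2 + 33 * X + 12) (15 * (X + 1) * (2 * X + 1) ^ 2)
    (∀ a : ℚ, Z.denom.eval a = 0 ↔ a = -1 ∨ a = -(1/2)) ∧
    ∀ a : ℚ, a ∈ ({-4, -(3/2), -(2/3), -(3/5), -(8/15)} : Set ℚ) → Z.denom.eval a ≠ 0 := by
  intro Z
  have hdvd : Z.denom ∣ (15 * (X + 1) * (2 * X + 1) ^ 2 : ℚ[X]) := by
    show (RatFunc.mk (20 * X ^ 2 + 33 * X + 12) (15 * (X + 1) * (2 * X + 1) ^ 2)).denom ∣ _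
    rw [RatFunc.mk_eq_div]
    exact RatFunc.denom_div_dvd _ _
  have hkey := key_eq
  have hqeval : ∀ a : ℚ, (15 * (X + 1) * (2 * X + 1) ^ 2 : ℚ[X]).eval a
      = 15 * (a + 1) * (2 * a + 1) ^ 2 := by
    intro a; simp
  have hpeval : ∀ a : ℚ, (20 * X ^ 2 + 33 * X + 12 : ℚ[X]).eval a
      = 20 * a ^ 2 + 33 * a + 12 := by
    intro a; simp
  have hiff : ∀ a : ℚ, Z.denom.eval a = 0 ↔ a = -1 ∨ a = -(1/2) := by
    intro a
    constructor
    · intro h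
      obtain ⟨c, hc⟩ := hdvd
      have h2 := congrArg (Polynomial.eval a) hc
      rw [hqeval, eval_mul, h, zero_mul] at h2
      have h3 : (a + 1) * (2 * a + 1) ^ 2 = 0 := by linarith [h2]
      rcases mul_eq_zero.mp h3 with h4 | h4
      · left; linarith
      · right
        have := pow_eq_zero_iff (n := 2) (by norm_num) |>.mp h4
        linarith
    · intro h
      have hk := congrArg (Polynomial.eval a) hkey
      rw [eval_mul, eval_mul, hqeval, hpeval] at hk
      have hqz : 15 * (a + 1) * (2 * a + 1) ^ 2 = 0 := by
        rcases h with h | h <;> subst h <;> norm_num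
      have hpz : 20 * a ^ 2 + 33 * a + 12 ≠ 0 := by
        rcases h with h | h <;> subst h <;> norm_num
      rw [hqz, mul_zero] at hk
      exact (mul_eq_zero.mp hk).resolve_left hpz
  refine ⟨hiff, ?_⟩
  intro a ha h
  rw [hiff a] at h
  simp only [Set.mem_insert_iff, Set.mem_singleton_iff] at ha
  rcases h with h | h <;> rcases ha with ha | ha | ha | ha | ha <;> subst ha <;> norm_num at h
end
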